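/- Suppose for coprime t and q that π(x; t, q) ≥ Li(x)/φ(q) − C₀ x^{1/2} (log x)^{15} for all x ≥ 2, where C₀ > 0 is an absolute constant. Then there is a constant C > 0 such that for all q ≥ 3, the least prime p ≡ t (mod q) satisfies p ≤ C φ(q)² (log φ(q))^{32}. -/

import Mathlib

open Filter Asymptotics Real

/-- The logarithmic integral `Li(x) = ∫₂ˣ dt / log t`. -/
noncomputable def Li (x : ℝ) : ℝ := ∫ t in (2:ℝ)..x, 1 / Real.log t

/-- The prime counting function as a function of a real variable. -/
noncomputable def primePi (x : ℝ) : ℝ := (Nat.primeCounting ⌊x⌋₊ : ℝ)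

/-- `piMod x t q` counts primes `p ≤ x` with `p ≡ t (mod q)`. -/
noncomputable def piMod (x : ℝ) (t q : ℕ) : ℝ :=
  (((Finset.range (⌊x⌋₊ + 1)).filter fun p => p.Prime ∧ p % q = t % q).card : ℝ)

/-!
The hypothesis makes `π(x; t, q)` positive as soon as the error term drops below the main term,
and `Li x ≥ x / (2 log x)` for `x ≥ 4`, so it suffices that `√x > 2 C₀ φ (log x) ^ 16`. At
`x = C φ² (log φ)^32` one has `√x = √C φ (log φ)^16` and `log x ≤ (2 log C + 34) log φ`, so
everything reduces to `√C > 2 C₀ (2 log C + 34) ^ 16`, which holds for all large `C` because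
powers of `log C` are `o(√C)`.
-/

theorem sub_div_log_le_Li {x : ℝ} (hx : 2 ≤ x) : (x - 2) / log x ≤ Li x := by
  have hlog : ∀ t ∈ Set.Icc 2 x, 0 < log t := fun t ht => log_pos (by linarith [ht.1])
  have hcont : ContinuousOn (fun t => 1 / log t) (Set.Icc 2 x) :=
    continuousOn_const.div (continuousOn_log.mono fun t ht => (zero_lt_two.trans_le ht.1).ne')
      fun t ht => (hlog t ht).ne'
  have := intervalIntegral.integral_mono_on (μ := MeasureTheory.volume) hx
    intervalIntegrable_const (hcont.intervalIntegrable_of_Icc hx) fun t ht =>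
      one_div_le_one_div_of_le (hlog t ht) (log_le_log (by linarith [ht.1]) ht.2)
  simpa [Li, div_eq_mul_inv] using this

theorem div_two_mul_log_le_Li {x : ℝ} (hx : 4 ≤ x) : x / (2 * log x) ≤ Li x := by
  have hlog : 0 < log x := log_pos (by linarith)
  calc x / (2 * log x) = x / 2 / log x := by rw [div_div]
    _ ≤ (x - 2) / log x := by gcongr; linarith
    _ ≤ Li x := sub_div_log_le_Li (by linarith)

theorem isLittleO_mul_log_add_pow_sqrt (a b : ℝ) (n : ℕ) :
    (fun x => (a * log x + b) ^ n) =o[atTop] sqrt := by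
  have hlin : (fun x => a * log x + b) =O[atTop] log :=
    (isBigO_const_mul_self a log atTop).add isLittleO_const_log_atTop.isBigO
  have hpow : (fun x => log x ^ (n : ℝ)) =o[atTop] fun x => x ^ (1 / 2 : ℝ) :=
    isLittleO_log_rpow_rpow_atTop _ (by norm_num)
  simp only [rpow_natCast, ← sqrt_eq_rpow] at hpow
  exact (hlin.pow n).trans_isLittleO hpow

theorem eventually_mul_mul_log_add_pow_lt_sqrt (K a b : ℝ) (n : ℕ) :
    ∀ᶠ x in atTop, K * (a * log x + b) ^ n < √x := by
  filter_upwards [((isLittleO_mul_log_add_pow_sqrt a b n).const_mul_left K).def one_half_pos,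
    eventually_gt_atTop 0] with x hx hx0
  have := sqrt_pos.2 hx0
  calc K * (a * log x + b) ^ n ≤ ‖K * (a * log x + b) ^ n‖ := le_norm_self _
    _ ≤ 1 / 2 * √x := by simpa [norm_of_nonneg this.le] using hx
    _ < √x := by linarith

theorem exists_prime_le_of_piMod_pos {x : ℝ} {t q : ℕ} (h : 0 < piMod x t q) :
    ∃ p : ℕ, p.Prime ∧ p % q = t % q ∧ (p : ℝ) ≤ x := by
  obtain ⟨p, hp⟩ := Finset.card_pos.mp (Nat.cast_pos.mp h)
  rw [Finset.mem_filter, Finset.mem_range, Nat.lt_succ_iff] at hp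
  have hx : 1 ≤ x := Nat.floor_pos.mp (hp.2.1.pos.trans_le hp.1)
  exact ⟨p, hp.2.1, hp.2.2, (Nat.cast_le.mpr hp.1).trans (Nat.floor_le (by linarith))⟩

theorem Nat.two_le_totient {n : ℕ} (hn : 3 ≤ n) : 2 ≤ n.totient := by
  obtain ⟨k, hk⟩ := Nat.totient_even (by omega : 2 < n)
  have := Nat.totient_pos.mpr (by omega : 0 < n)
  omega

theorem log_mul_sq_mul_log_pow_le {C φ : ℝ} (hC : 1 ≤ C) (hφ : 2 ≤ φ) :
    log (C * φ ^ 2 * log φ ^ 32) ≤ (2 * log C + 34) * log φ := by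
  have hL : 1 / 2 < log φ :=
    (log_two_gt_d9.trans_le' (by norm_num)).trans_le (log_le_log (by norm_num) hφ)
  have hlogL : log (log φ) ≤ log φ := by
    linarith [log_le_sub_one_of_pos (by linarith : 0 < log φ)]
  have hlogC : 0 ≤ log C := log_nonneg hC
  -- `log C ≤ 2 log C · log φ` absorbs the constant term into the factor `log φ`
  rw [log_mul (by positivity) (by positivity), log_mul (by positivity) (by positivity),
    log_pow, log_pow]
  push_cast
  nlinarith

theorem four_le_mul_sq_mul_log_pow {C φ : ℝ} (hC : 2 ^ 32 ≤ C) (hφ : 2 ≤ φ) :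
    4 ≤ C * φ ^ 2 * log φ ^ 32 := by
  have hL : 1 / 2 ≤ log φ :=
    (log_two_gt_d9.le.trans' (by norm_num)).trans (log_le_log (by norm_num) hφ)
  calc (4 : ℝ) = 2 ^ 32 * 2 ^ 2 * (1 / 2) ^ 32 := by norm_num
    _ ≤ C * φ ^ 2 * log φ ^ 32 := by gcongr

theorem two_mul_mul_log_pow_lt_sqrt {C₀ C φ : ℝ} (hC₀ : 0 ≤ C₀) (hC : 2 ^ 32 ≤ C) (hφ : 2 ≤ φ)
    (hCbig : 2 * C₀ * (2 * log C + 34) ^ 16 < √C) :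
    2 * C₀ * φ * log (C * φ ^ 2 * log φ ^ 32) ^ 16 < √(C * φ ^ 2 * log φ ^ 32) := by
  have hL : 0 < log φ := log_pos (by linarith)
  have hx : 0 < log (C * φ ^ 2 * log φ ^ 32) :=
    log_pos (by linarith [four_le_mul_sq_mul_log_pow hC hφ])
  calc 2 * C₀ * φ * log (C * φ ^ 2 * log φ ^ 32) ^ 16
      ≤ 2 * C₀ * φ * ((2 * log C + 34) * log φ) ^ 16 := by
        gcongr; exact log_mul_sq_mul_log_pow_le (by linarith) hφ
    _ = 2 * C₀ * (2 * log C + 34) ^ 16 * (φ * log φ ^ 16) := by ring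
    _ < √C * (φ * log φ ^ 16) := by gcongr
    _ = √(C * φ ^ 2 * log φ ^ 32) := by
        rw [show C * φ ^ 2 * log φ ^ 32 = C * (φ * log φ ^ 16) ^ 2 by ring,
          sqrt_mul (by linarith), sqrt_sq (by positivity)]

theorem mul_sqrt_mul_log_pow_lt_Li_div {C₀ φ x : ℝ} (hφ : 0 < φ) (hx : 4 ≤ x)
    (h : 2 * C₀ * φ * log x ^ 16 < √x) : C₀ * √x * log x ^ 15 < Li x / φ := by
  have hlog : 0 < log x := log_pos (by linarith)
  have hsqrt : 0 < √x := sqrt_pos.2 (by linarith)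
  calc C₀ * √x * log x ^ 15 = √x * (2 * C₀ * φ * log x ^ 16) / (2 * log x * φ) := by
        field_simp
    _ < √x * √x / (2 * log x * φ) := by gcongr
    _ = x / (2 * log x) / φ := by rw [mul_self_sqrt (by linarith), div_div]
    _ ≤ Li x / φ := by gcongr; exact div_two_mul_log_le_Li hx

theorem least_prime_in_AP
    (C₀ : ℝ) (hC₀ : 0 < C₀)
    (H : ∀ q t : ℕ, Nat.Coprime t q → ∀ x : ℝ, 2 ≤ x →
      piMod x t q ≥ Li x / (Nat.totient q : ℝ) - C₀ * Real.sqrt x * (Real.log x) ^ (15 : ℕ)) :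
    ∃ C : ℝ, 0 < C ∧ ∀ q : ℕ, 3 ≤ q → ∀ t : ℕ, Nat.Coprime t q →
      ∃ p : ℕ, p.Prime ∧ p % q = t % q ∧
        (p : ℝ) ≤ C * (Nat.totient q : ℝ) ^ 2 * (Real.log (Nat.totient q)) ^ (32 : ℕ) := by
  obtain ⟨C, hC, hCbig⟩ := ((eventually_ge_atTop (2 ^ 32)).and
    (eventually_mul_mul_log_add_pow_lt_sqrt (2 * C₀) 2 34 16)).exists
  refine ⟨C, by positivity, fun q hq t htq => ?_⟩
  have hφ : (2 : ℝ) ≤ q.totient := by exact_mod_cast Nat.two_le_totient hq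
  have hx := four_le_mul_sq_mul_log_pow hC hφ
  have herror := mul_sqrt_mul_log_pow_lt_Li_div (by linarith) hx
    (two_mul_mul_log_pow_lt_sqrt hC₀.le hC hφ hCbig)
  have hcount := H q t htq _ (hx.trans' (by norm_num))
  exact exists_prime_le_of_piMod_pos (by linarith)
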